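/- The number e · ∫_0^1 e^{-1/x}/x dx satisfies 1/2 < e · ∫_0^1 e^{-1/x}/x dx < 1. -/

import Mathlib

/-!
Integration by parts against `d/dx (x^(n+1) e^(-1/x))` shows that the moments
`M n = ∫₀¹ x^(n-1) e^(-1/x) dx` satisfy `M n + (n+1) M (n+1) = e⁻¹`. Iterating from the Gompertz
integral `M 0` gives `e M 0 = 1 - 1 + 2 - 6 + ⋯ ± n! e M n`, Euler's divergent series with an
explicit remainder. One step and `M 1 > 0` give the upper bound; three steps and `M 3 < M 2` give
`e M 2 > 1/4`, hence `e M 0 = 2 e M 2 > 1/2`.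
-/

open Real Set MeasureTheory intervalIntegral Polynomial

namespace expNegInvGlue

theorem hasDerivAt (x : ℝ) : HasDerivAt expNegInvGlue (x⁻¹ ^ 2 * expNegInvGlue x) x := by
  simpa using hasDerivAt_polynomial_eval_inv_mul 1 x

theorem continuous_inv_mul : Continuous fun x => x⁻¹ * expNegInvGlue x := by
  simpa using continuous_polynomial_eval_inv_mul X

theorem hasDerivAt_pow_succ_mul (n : ℕ) (x : ℝ) :
    HasDerivAt (fun x => x ^ (n + 1) * expNegInvGlue x)
      ((n + 1) * (x ^ (n + 1) * (x⁻¹ * expNegInvGlue x)) + x ^ n * (x⁻¹ * expNegInvGlue x)) x := by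
  refine ((hasDerivAt_pow (n + 1) x).mul (hasDerivAt x)).congr_deriv ?_
  rcases eq_or_ne x 0 with rfl | hx
  · simp
  · field_simp
    push_cast
    ring

end expNegInvGlue

/-- `∫₀¹ x^(n-1) e^(-1/x) dx`, written with `x ^ n * x⁻¹` so that `n = 0` is allowed. -/
noncomputable def expNegInvMoment (n : ℕ) : ℝ :=
  ∫ x in (0 : ℝ)..1, x ^ n * (x⁻¹ * expNegInvGlue x)

theorem intervalIntegrable_pow_mul_inv_mul_expNegInvGlue (n : ℕ) (a b : ℝ) :
    IntervalIntegrable (fun x => x ^ n * (x⁻¹ * expNegInvGlue x)) volume a b :=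
  ((continuous_pow n).mul expNegInvGlue.continuous_inv_mul).intervalIntegrable a b

theorem expNegInvMoment_add_mul_succ (n : ℕ) :
    expNegInvMoment n + (n + 1) * expNegInvMoment (n + 1) = exp (-1) := by
  have hint := intervalIntegrable_pow_mul_inv_mul_expNegInvGlue
  have hFTC := integral_eq_sub_of_hasDerivAt
    (fun x _ => expNegInvGlue.hasDerivAt_pow_succ_mul n x)
    (((hint (n + 1) 0 1).const_mul _).add (hint n 0 1))
  rw [integral_add ((hint (n + 1) 0 1).const_mul _) (hint n 0 1),
    intervalIntegral.integral_const_mul] at hFTC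
  have hends : (1 : ℝ) ^ (n + 1) * expNegInvGlue 1 - 0 ^ (n + 1) * expNegInvGlue 0 = exp (-1) := by
    simp [expNegInvGlue]
  rw [expNegInvMoment, expNegInvMoment]
  linarith

theorem expNegInvMoment_pos (n : ℕ) : 0 < expNegInvMoment n := by
  refine intervalIntegral_pos_of_pos_on (intervalIntegrable_pow_mul_inv_mul_expNegInvGlue n 0 1)
    (fun x hx => ?_) one_pos
  have := hx.1
  have := expNegInvGlue.pos_of_pos hx.1
  positivity

theorem expNegInvMoment_succ_lt (n : ℕ) : expNegInvMoment (n + 1) < expNegInvMoment n := by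
  have hint := intervalIntegrable_pow_mul_inv_mul_expNegInvGlue
  rw [← sub_pos, expNegInvMoment, expNegInvMoment, ← integral_sub (hint n 0 1) (hint (n + 1) 0 1)]
  refine intervalIntegral_pos_of_pos_on ((hint n 0 1).sub (hint (n + 1) 0 1)) (fun x hx => ?_)
    one_pos
  have := hx.1
  have := expNegInvGlue.pos_of_pos hx.1
  have := sub_pos.2 (pow_lt_pow_right_of_lt_one₀ hx.1 hx.2 n.lt_succ_self)
  rw [← sub_mul]
  positivity

theorem setIntegral_Ioo_exp_neg_one_div_div :
    ∫ x in Ioo (0 : ℝ) 1, exp (-1 / x) / x = expNegInvMoment 0 := by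
  rw [expNegInvMoment, integral_of_le zero_le_one, integral_Ioc_eq_integral_Ioo]
  refine setIntegral_congr_fun measurableSet_Ioo fun x hx => ?_
  simp [expNegInvGlue, hx.1.not_ge, div_eq_inv_mul]

theorem gompertz_bounds :
    1 / 2 < Real.exp 1 * ∫ x in Set.Ioo (0 : ℝ) 1, Real.exp (-1 / x) / x ∧
    Real.exp 1 * (∫ x in Set.Ioo (0 : ℝ) 1, Real.exp (-1 / x) / x) < 1 := by
  rw [setIntegral_Ioo_exp_neg_one_div_div]
  have h₀ := expNegInvMoment_add_mul_succ 0
  have h₁ := expNegInvMoment_add_mul_succ 1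
  have h₂ := expNegInvMoment_add_mul_succ 2
  push_cast at h₀ h₁ h₂
  have hupper : expNegInvMoment 0 < exp (-1) := by linarith [expNegInvMoment_pos 1]
  have hlower : exp (-1) / 2 < expNegInvMoment 0 := by linarith [expNegInvMoment_succ_lt 2]
  have he : exp 1 * exp (-1) = 1 := by rw [← exp_add]; norm_num
  constructor <;> nlinarith [exp_pos 1]
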